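/- arXiv:2602.19748 — 7 statements merged into one kernel-verified Lean document; each statement's English description precedes it below -/
import Mathlib

section
/- Fix Φ ∈ (0, π) and for x, y > 0 define the Euclidean inner angle θ(x, y) = arccos((x + y cos Φ)/√(x² + y² + 2 x y cos Φ)). Then for each fixed y > 0 the function x ↦ θ(x, y) is strictly decreasing on (0, ∞), and for each fixed x > 0 the function y ↦ θ(x, y) is strictly increasing on (0, ∞). -/
/-- The Euclidean inner angle at the vertex of radius `x` in the two-circle configuration
with radii `x, y` and exterior intersection angle `Φ`. -/
noncomputable def thetaE (Φ x y : ℝ) : ℝ :=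
  Real.arccos ((x + y * Real.cos Φ) / Real.sqrt (x ^ 2 + y ^ 2 + 2 * x * y * Real.cos Φ))

/-!
Completing the square, `x² + y² + 2xy cos Φ = (x + y cos Φ)² + (y sin Φ)²`, so `θ(x, y)` is the
angle of the vector `(x + y cos Φ, y sin Φ)` with the first axis, namely
`θ(x, y) = π/2 - arctan (x / (y sin Φ) + cot Φ)`. Since `sin Φ > 0`, the argument of `arctan`
increases with `x` and decreases with `y`.
-/

open Real

lemma arccos_div_sqrt_sq_add_sq (a : ℝ) {b : ℝ} (hb : 0 < b) :
    arccos (a / √(a ^ 2 + b ^ 2)) = π / 2 - arctan (a / b) := by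
  have hsqrt : √(1 + (a / b) ^ 2) = √(a ^ 2 + b ^ 2) / b := by
    rw [← Real.sqrt_sq hb.le, ← Real.sqrt_div' _ (sq_nonneg b), Real.sqrt_sq hb.le]
    congr 1
    field_simp
    ring
  rw [arccos_eq_pi_div_two_sub_arcsin, arctan_eq_arcsin, hsqrt]
  congr 2
  field_simp

lemma thetaE_eq_pi_div_two_sub_arctan (Φ x : ℝ) {y : ℝ} (hy : 0 < y) (hΦ : 0 < sin Φ) :
    thetaE Φ x y = π / 2 - arctan (x / (y * sin Φ) + cos Φ / sin Φ) := by
  have hsq : x ^ 2 + y ^ 2 + 2 * x * y * cos Φ = (x + y * cos Φ) ^ 2 + (y * sin Φ) ^ 2 := by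
    linear_combination y ^ 2 * (sin_sq_add_cos_sq Φ).symm
  rw [thetaE, hsq, arccos_div_sqrt_sq_add_sq _ (mul_pos hy hΦ)]
  congr 2
  field_simp

/-- For a fixed weight `Φ ∈ (0, π)`, the Euclidean inner angle `θ(x, y)` is strictly
decreasing in `x` on `(0, ∞)` for each fixed `y > 0`, and strictly increasing in `y` on
`(0, ∞)` for each fixed `x > 0`. -/
theorem euclidean_angle_monotone (Φ : ℝ) (hΦ : Φ ∈ Set.Ioo 0 Real.pi) :
    (∀ y : ℝ, 0 < y → StrictAntiOn (fun x => thetaE Φ x y) (Set.Ioi 0)) ∧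
    (∀ x : ℝ, 0 < x → StrictMonoOn (fun y => thetaE Φ x y) (Set.Ioi 0)) := by
  have hsin : 0 < sin Φ := sin_pos_of_pos_of_lt_pi hΦ.1 hΦ.2
  constructor
  · intro y hy x₁ _ x₂ _ hx
    have : x₁ / (y * sin Φ) < x₂ / (y * sin Φ) := div_lt_div_of_pos_right hx (by positivity)
    simp only [thetaE_eq_pi_div_two_sub_arctan Φ _ hy hsin]
    linarith [arctan_strictMono (add_lt_add_left this (cos Φ / sin Φ))]
  · intro x hx y₁ hy₁ y₂ hy₂ hy
    have : x / (y₂ * sin Φ) < x / (y₁ * sin Φ) :=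
      div_lt_div_of_pos_left hx (mul_pos hy₁ hsin) (by gcongr)
    simp only [thetaE_eq_pi_div_two_sub_arctan Φ x hy₁ hsin,
      thetaE_eq_pi_div_two_sub_arctan Φ x hy₂ hsin]
    linarith [arctan_strictMono (add_lt_add_left this (cos Φ / sin Φ))]
end

section
/- Fix Φ ∈ (0, π). For x, y > 0 let l(x, y) = arcosh(cosh x cosh y + sinh x sinh y cos Φ) and let f(x, y) = (cosh l(x,y) · cosh x − cosh y)/(sinh l(x,y) · sinh x) be the cosine (given by the hyperbolic law of cosines) of the inner angle at the vertex of radius x. Then for all x, y > 0 the partial derivative of f with respect to x exists and equals sinh²y · cosh l(x,y) · sin²Φ / sinh³ l(x,y), which is strictly positive. -/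
/-- The inverse of `cosh` on `[1, ∞)`. -/
noncomputable def arcosh (x : ℝ) : ℝ := Real.log (x + Real.sqrt (x ^ 2 - 1))

/-- The hyperbolic edge length of the two-circle configuration with radii `x, y` and
exterior intersection angle `Φ`. -/
noncomputable def hypLen (Φ x y : ℝ) : ℝ :=
  arcosh (Real.cosh x * Real.cosh y + Real.sinh x * Real.sinh y * Real.cos Φ)

/-- The cosine of the hyperbolic inner angle at the vertex of radius `x`, given by the
hyperbolic law of cosines. -/
noncomputable def hypCos (Φ x y : ℝ) : ℝ :=
  (Real.cosh (hypLen Φ x y) * Real.cosh x - Real.cosh y) /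
    (Real.sinh (hypLen Φ x y) * Real.sinh x)

/-!
Write `T(s) = cosh s cosh y + sinh s sinh y cos Φ` and `U(s) = sinh s cosh y + cosh s sinh y cos Φ`,
so that `T' = U`, `U' = T`, `cosh l = T` and `sinh l = √(T² - 1)`. The law of cosines collapses to
`f = U / √(T² - 1)`, whose derivative is `T (T² - 1 - U²) / (T² - 1)^{3/2}`; and
`T² - U² = cosh² y - sinh² y cos² Φ`, so `T² - 1 - U² = sinh² y sin² Φ`.
-/

open Real hiding arcosh

theorem arcosh_eq_real_arcosh (t : ℝ) : arcosh t = Real.arcosh t := rfl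

theorem one_lt_cosh_mul_cosh_add_sinh_mul_sinh_mul {x y c : ℝ} (hx : 0 < x) (hy : 0 < y)
    (hc : -1 < c) : 1 < cosh x * cosh y + sinh x * sinh y * c := by
  have hxy : 0 < sinh x * sinh y := mul_pos (sinh_pos_iff.mpr hx) (sinh_pos_iff.mpr hy)
  calc 1 ≤ cosh (x - y) := one_le_cosh _
    _ < cosh (x - y) + sinh x * sinh y * (1 + c) :=
      lt_add_of_pos_right _ (mul_pos hxy (by linarith))
    _ = cosh x * cosh y + sinh x * sinh y * c := by rw [cosh_sub]; ring

theorem cosh_mul_cosh_add_sq_sub_one_sub_sinh_mul_cosh_add_sq (x y c : ℝ) :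
    (cosh x * cosh y + sinh x * sinh y * c) ^ 2 - 1 - (sinh x * cosh y + cosh x * sinh y * c) ^ 2
      = sinh y ^ 2 * (1 - c ^ 2) := by
  linear_combination (cosh y ^ 2 - sinh y ^ 2 * c ^ 2) * cosh_sq x + cosh_sq y

theorem HasDerivAt.div_sqrt_sq_sub_one {T U : ℝ → ℝ} {x : ℝ} (hT : HasDerivAt T (U x) x)
    (hU : HasDerivAt U (T x) x) (h : 1 < T x ^ 2) :
    HasDerivAt (fun s => U s / √(T s ^ 2 - 1))
      (T x * (T x ^ 2 - 1 - U x ^ 2) / √(T x ^ 2 - 1) ^ 3) x := by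
  have hw : 0 < T x ^ 2 - 1 := sub_pos.mpr h
  have hsqrt : 0 < √(T x ^ 2 - 1) := sqrt_pos.mpr hw
  have hroot :
      HasDerivAt (fun s => √(T s ^ 2 - 1)) (2 * T x * U x / (2 * √(T x ^ 2 - 1))) x := by
    simpa using ((hT.pow 2).sub_const 1).sqrt hw.ne'
  refine (hU.div hroot hsqrt.ne').congr_deriv ?_
  have hsq : √(T x ^ 2 - 1) ^ 2 = T x ^ 2 - 1 := sq_sqrt hw.le
  field_simp
  linear_combination T x * hsq

section HyperbolicTriangle

variable {Φ x y : ℝ}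

theorem cosh_hypLen (h : 1 ≤ cosh x * cosh y + sinh x * sinh y * cos Φ) :
    cosh (hypLen Φ x y) = cosh x * cosh y + sinh x * sinh y * cos Φ := by
  rw [hypLen, arcosh_eq_real_arcosh, cosh_arcosh h]

theorem sinh_hypLen (h : 1 ≤ cosh x * cosh y + sinh x * sinh y * cos Φ) :
    sinh (hypLen Φ x y) = √((cosh x * cosh y + sinh x * sinh y * cos Φ) ^ 2 - 1) := by
  rw [hypLen, arcosh_eq_real_arcosh, sinh_arcosh h]

theorem hypCos_eq_div_sqrt (hx : x ≠ 0) (h : 1 ≤ cosh x * cosh y + sinh x * sinh y * cos Φ) :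
    hypCos Φ x y = (sinh x * cosh y + cosh x * sinh y * cos Φ) /
      √((cosh x * cosh y + sinh x * sinh y * cos Φ) ^ 2 - 1) := by
  have hnum : (cosh x * cosh y + sinh x * sinh y * cos Φ) * cosh x - cosh y =
      (sinh x * cosh y + cosh x * sinh y * cos Φ) * sinh x := by
    linear_combination cosh y * cosh_sq x
  rw [hypCos, cosh_hypLen h, sinh_hypLen h, hnum,
    mul_div_mul_right _ _ (sinh_ne_zero.mpr hx)]

end HyperbolicTriangle

/-- For a fixed weight `Φ ∈ (0, π)`, the cosine `f(x, y)` of the hyperbolic inner angle has,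
for all `x, y > 0`, partial derivative with respect to `x` equal to
`sinh²y · cosh l(x,y) · sin²Φ / sinh³ l(x,y)`, which is strictly positive. -/
theorem hyperbolic_cos_deriv_fst (Φ : ℝ) (hΦ : Φ ∈ Set.Ioo 0 Real.pi) :
    ∀ x y : ℝ, 0 < x → 0 < y →
      HasDerivAt (fun s : ℝ => hypCos Φ s y)
        (Real.sinh y ^ 2 * Real.cosh (hypLen Φ x y) * Real.sin Φ ^ 2 /
          Real.sinh (hypLen Φ x y) ^ 3) x ∧
      0 < Real.sinh y ^ 2 * Real.cosh (hypLen Φ x y) * Real.sin Φ ^ 2 /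
          Real.sinh (hypLen Φ x y) ^ 3 := by
  intro x y hx hy
  have hsin : 0 < sin Φ := sin_pos_of_pos_of_lt_pi hΦ.1 hΦ.2
  have hcos : -1 < cos Φ := by nlinarith [sin_sq_add_cos_sq Φ]
  have hT : ∀ s, 0 < s → 1 < cosh s * cosh y + sinh s * sinh y * cos Φ := fun s hs =>
    one_lt_cosh_mul_cosh_add_sinh_mul_sinh_mul hs hy hcos
  have hderiv := HasDerivAt.div_sqrt_sq_sub_one
    (T := fun s => cosh s * cosh y + sinh s * sinh y * cos Φ)
    (U := fun s => sinh s * cosh y + cosh s * sinh y * cos Φ)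
    (((hasDerivAt_cosh x).mul_const _).add (((hasDerivAt_sinh x).mul_const _).mul_const _))
    (((hasDerivAt_sinh x).mul_const _).add (((hasDerivAt_cosh x).mul_const _).mul_const _))
    (one_lt_pow₀ (hT x hx) two_ne_zero)
  rw [cosh_mul_cosh_add_sq_sub_one_sub_sinh_mul_cosh_add_sq, ← sin_sq,
    ← sinh_hypLen (hT x hx).le, ← cosh_hypLen (hT x hx).le] at hderiv
  refine ⟨?_, ?_⟩
  · refine hderiv.congr_of_eventuallyEq ?_ |>.congr_deriv (by ring)
    filter_upwards [Ioi_mem_nhds hx] with s hs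
    exact hypCos_eq_div_sqrt hs.ne' (hT s hs).le
  · have hl : 0 < hypLen Φ x y := arcosh_pos (hT x hx)
    have hsinh_l := sinh_pos_iff.mpr hl
    have hsinh_y := sinh_pos_iff.mpr hy
    positivity
end

section
/- Fix Φ ∈ (0, π). For the hyperbolic inner angle at equal radii, θ(t, t) → 0 as t → +∞, where θ(x, y) = arccos((cosh l(x,y) · cosh x − cosh y)/(sinh l(x,y) · sinh x)) and l(x, y) = arcosh(cosh x cosh y + sinh x sinh y cos Φ). -/
/-- The hyperbolic inner angle at the vertex of radius `x` in the two-circle configuration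
with radii `x, y` and exterior intersection angle `Φ`. -/
noncomputable def thetaH (Φ x y : ℝ) : ℝ :=
  Real.arccos ((Real.cosh (hypLen Φ x y) * Real.cosh x - Real.cosh y) /
    (Real.sinh (hypLen Φ x y) * Real.sinh x))

/-! On the diagonal the angle formula collapses to `cos θ(t, t) = tanh (l / 2) / tanh t`
(the isosceles triangle splits into two right triangles), where `l = l(t, t)` satisfies
`cosh l = 1 + (1 + cos Φ) sinh² t`. Since `cos Φ > -1`, `l → ∞`, so both `tanh` factors tend
to `1` and `θ(t, t) → arccos 1 = 0`. -/

open Filter Topology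

namespace Real

theorem tanh_eq_exp_neg_sq (x : ℝ) :
    tanh x = (1 - exp (-x) ^ 2) / (1 + exp (-x) ^ 2) := by
  rw [tanh_eq_sinh_div_cosh, sinh_eq, cosh_eq, exp_neg]
  field_simp

theorem tendsto_tanh_atTop : Tendsto tanh atTop (𝓝 1) := by
  have h := ((tendsto_exp_neg_atTop_nhds_zero.pow 2).const_sub 1).div
    ((tendsto_exp_neg_atTop_nhds_zero.pow 2).const_add 1) (by norm_num)
  norm_num at h
  exact h.congr fun x ↦ (tanh_eq_exp_neg_sq x).symm

theorem tendsto_sinh_atTop : Tendsto sinh atTop atTop :=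
  tendsto_atTop_mono' _ (eventually_ge_atTop 0 |>.mono fun _ ↦ self_le_sinh_iff.2) tendsto_id

theorem cosh_sub_one_div_sinh (x : ℝ) : (cosh x - 1) / sinh x = tanh (x / 2) := by
  obtain ⟨u, rfl⟩ : ∃ u, x = 2 * u := ⟨x / 2, by ring⟩
  rw [mul_div_cancel_left₀ u two_ne_zero, cosh_two_mul, sinh_two_mul, tanh_eq_sinh_div_cosh,
    show cosh u ^ 2 + sinh u ^ 2 - 1 = 2 * sinh u * sinh u by linear_combination cosh_sq' u]
  rcases eq_or_ne (sinh u) 0 with h | h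
  · simp [h]
  · exact mul_div_mul_left _ _ (by positivity)

end Real

theorem tendsto_arcosh_atTop : Tendsto arcosh atTop atTop := by
  refine tendsto_atTop_mono' _ ?_ Real.tendsto_log_atTop
  filter_upwards [eventually_gt_atTop 0] with x hx
  exact Real.log_le_log hx (le_add_of_nonneg_right (Real.sqrt_nonneg _))

open Real

theorem tendsto_hypLen_self_atTop {Φ : ℝ} (hΦ : -1 < cos Φ) :
    Tendsto (fun t ↦ hypLen Φ t t) atTop atTop := by
  have hcosh : ∀ t, cosh t * cosh t + sinh t * sinh t * cos Φ = 1 + (1 + cos Φ) * sinh t ^ 2 :=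
    fun t ↦ by linear_combination cosh_sq' t
  have hsinh_sq := (tendsto_pow_atTop two_ne_zero).comp tendsto_sinh_atTop
  simp only [hypLen, hcosh]
  exact tendsto_arcosh_atTop.comp
    (tendsto_atTop_add_const_left _ 1 (hsinh_sq.const_mul_atTop (by linarith)))

theorem thetaH_self (Φ t : ℝ) :
    thetaH Φ t t = arccos (tanh (hypLen Φ t t / 2) / tanh t) := by
  rw [thetaH, ← cosh_sub_one_div_sinh, tanh_eq_sinh_div_cosh, div_div_eq_mul_div,
    mul_div_assoc, ← mul_div_mul_comm, sub_one_mul]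

/-- For a fixed weight `Φ ∈ (0, π)`, the hyperbolic inner angle at equal radii tends to
`0` as `t → +∞`. -/
theorem hyperbolic_angle_diag_tendsto_atTop (Φ : ℝ) (hΦ : Φ ∈ Set.Ioo 0 Real.pi) :
    Filter.Tendsto (fun t => thetaH Φ t t) Filter.atTop (nhds 0) := by
  have hcos : -1 < cos Φ := by
    simpa using cos_lt_cos_of_nonneg_of_le_pi hΦ.1.le le_rfl hΦ.2
  have hratio : Tendsto (fun t ↦ tanh (hypLen Φ t t / 2) / tanh t) atTop (𝓝 1) := by
    rw [← div_one (1 : ℝ)]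
    exact (tendsto_tanh_atTop.comp ((tendsto_hypLen_self_atTop hcos).atTop_div_const
      two_pos)).div tendsto_tanh_atTop one_ne_zero
  simp only [thetaH_self, ← arccos_one]
  exact (continuous_arccos.tendsto 1).comp hratio
end

section
/- Fix Φ ∈ (0, π) and let θ(x, y) = arccos((x + y cos Φ)/√(x² + y² + 2 x y cos Φ)) for x, y > 0 be the Euclidean inner angle. If 0 < x ≤ y, then θ(x, y) ≥ θ(x, x) and θ(x, y) ≥ θ(y, y); if x ≥ y > 0, then θ(x, y) ≤ θ(x, x) and θ(x, y) ≤ θ(y, y). (Comparison principle for the Euclidean inner angle.) -/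
open Real Set

section

variable {Φ x y : ℝ}

lemma sq_add_mul_cos_sub_cos_half_sq_mul (Φ x y : ℝ) :
    (x + y * cos Φ) ^ 2 - cos (Φ / 2) ^ 2 * (x ^ 2 + y ^ 2 + 2 * x * y * cos Φ) =
      sin (Φ / 2) ^ 2 * ((x - y) * (x + y + 2 * y * cos Φ)) := by
  have hcos : cos Φ = 2 * cos (Φ / 2) ^ 2 - 1 := by rw [← cos_two_mul]; ring_nf
  rw [sin_sq, hcos]
  ring

lemma neg_one_lt_cos_of_mem_Ioo (hΦ : Φ ∈ Ioo 0 π) : -1 < cos Φ := by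
  simpa [cos_pi] using cos_lt_cos_of_nonneg_of_le_pi hΦ.1.le le_rfl hΦ.2

lemma cos_half_nonneg_of_mem_Ioo (hΦ : Φ ∈ Ioo 0 π) : 0 ≤ cos (Φ / 2) :=
  cos_nonneg_of_mem_Icc ⟨by linarith [pi_pos, hΦ.1], by linarith [hΦ.2]⟩

lemma arccos_cos_half_of_mem_Ioo (hΦ : Φ ∈ Ioo 0 π) : arccos (cos (Φ / 2)) = Φ / 2 :=
  arccos_cos (by linarith [hΦ.1]) (by linarith [hΦ.2, pi_pos])

lemma sq_add_sq_add_two_mul_mul_cos_nonneg (hx : 0 ≤ x) (hy : 0 ≤ y) :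
    0 ≤ x ^ 2 + y ^ 2 + 2 * x * y * cos Φ := by
  nlinarith [sq_nonneg (x - y),
    mul_nonneg (mul_nonneg hx hy) (neg_le_iff_add_nonneg.1 (neg_one_le_cos Φ))]

lemma sq_add_sq_add_two_mul_mul_cos_pos (hc : -1 < cos Φ) (hx : 0 < x) (hy : 0 < y) :
    0 < x ^ 2 + y ^ 2 + 2 * x * y * cos Φ := by
  nlinarith [sq_nonneg (x - y), mul_pos (mul_pos hx hy) (neg_lt_iff_pos_add.1 hc)]

lemma cos_half_mul_sqrt_le (hs : 0 ≤ cos (Φ / 2)) (hy : 0 ≤ y) (hyx : y ≤ x) :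
    cos (Φ / 2) * √(x ^ 2 + y ^ 2 + 2 * x * y * cos Φ) ≤ x + y * cos Φ := by
  have hc := neg_one_le_cos Φ
  have hD := sq_add_sq_add_two_mul_mul_cos_nonneg (Φ := Φ) (hy.trans hyx) hy
  have hnum : 0 ≤ x + y * cos Φ := by nlinarith
  have hfactor : 0 ≤ (x - y) * (x + y + 2 * y * cos Φ) :=
    mul_nonneg (sub_nonneg.2 hyx) (by nlinarith)
  refine (pow_le_pow_iff_left₀ (by positivity) hnum two_ne_zero).1 ?_
  rw [mul_pow, sq_sqrt hD]
  nlinarith [sq_add_mul_cos_sub_cos_half_sq_mul Φ x y,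
    mul_nonneg (sq_nonneg (sin (Φ / 2))) hfactor]

lemma le_cos_half_mul_sqrt (hs : 0 ≤ cos (Φ / 2)) (hx : 0 ≤ x) (hxy : x ≤ y) :
    x + y * cos Φ ≤ cos (Φ / 2) * √(x ^ 2 + y ^ 2 + 2 * x * y * cos Φ) := by
  have hrhs : 0 ≤ cos (Φ / 2) * √(x ^ 2 + y ^ 2 + 2 * x * y * cos Φ) := by positivity
  rcases le_or_gt (x + y * cos Φ) 0 with hnum | hnum
  · exact hnum.trans hrhs
  have hc := neg_one_le_cos Φ
  have hD := sq_add_sq_add_two_mul_mul_cos_nonneg (Φ := Φ) hx (hx.trans hxy)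
  -- `x + y + 2y c = (x + y c) + y (1 + c)` may be negative when `x ≤ y`, but not here
  have hfactor : (x - y) * (x + y + 2 * y * cos Φ) ≤ 0 :=
    mul_nonpos_of_nonpos_of_nonneg (sub_nonpos.2 hxy) (by nlinarith)
  refine (pow_le_pow_iff_left₀ hnum.le hrhs two_ne_zero).1 ?_
  rw [mul_pow, sq_sqrt hD]
  nlinarith [sq_add_mul_cos_sub_cos_half_sq_mul Φ x y,
    mul_nonpos_of_nonneg_of_nonpos (sq_nonneg (sin (Φ / 2))) hfactor]

lemma thetaE_le_half (hΦ : Φ ∈ Ioo 0 π) (hy : 0 < y) (hyx : y ≤ x) :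
    thetaE Φ x y ≤ Φ / 2 := by
  have hD := sq_add_sq_add_two_mul_mul_cos_pos (neg_one_lt_cos_of_mem_Ioo hΦ) (hy.trans_le hyx) hy
  rw [← arccos_cos_half_of_mem_Ioo hΦ]
  exact arccos_le_arccos <| (le_div_iff₀ (sqrt_pos.2 hD)).2 <|
    cos_half_mul_sqrt_le (cos_half_nonneg_of_mem_Ioo hΦ) hy.le hyx

lemma half_le_thetaE (hΦ : Φ ∈ Ioo 0 π) (hx : 0 < x) (hxy : x ≤ y) :
    Φ / 2 ≤ thetaE Φ x y := by
  have hD := sq_add_sq_add_two_mul_mul_cos_pos (neg_one_lt_cos_of_mem_Ioo hΦ) hx (hx.trans_le hxy)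
  rw [← arccos_cos_half_of_mem_Ioo hΦ]
  exact arccos_le_arccos <| (div_le_iff₀ (sqrt_pos.2 hD)).2 <|
    le_cos_half_mul_sqrt (cos_half_nonneg_of_mem_Ioo hΦ) hx.le hxy

lemma thetaE_self (hΦ : Φ ∈ Ioo 0 π) (hx : 0 < x) : thetaE Φ x x = Φ / 2 :=
  le_antisymm (thetaE_le_half hΦ hx le_rfl) (half_le_thetaE hΦ hx le_rfl)

end

/-- Comparison principle for the Euclidean inner angle: for `Φ ∈ (0, π)`, if `0 < x ≤ y`
then `θ(x, y) ≥ θ(x, x)` and `θ(x, y) ≥ θ(y, y)`; if `x ≥ y > 0` then `θ(x, y) ≤ θ(x, x)`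
and `θ(x, y) ≤ θ(y, y)`. -/
theorem euclidean_angle_comparison (Φ : ℝ) (hΦ : Φ ∈ Set.Ioo 0 Real.pi) (x y : ℝ) :
    (0 < x → x ≤ y → thetaE Φ x x ≤ thetaE Φ x y ∧ thetaE Φ y y ≤ thetaE Φ x y) ∧
    (0 < y → y ≤ x → thetaE Φ x y ≤ thetaE Φ x x ∧ thetaE Φ x y ≤ thetaE Φ y y) := by
  constructor
  · intro hx hxy
    rw [thetaE_self hΦ hx, thetaE_self hΦ (hx.trans_le hxy)]
    exact ⟨half_le_thetaE hΦ hx hxy, half_le_thetaE hΦ hx hxy⟩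
  · intro hy hyx
    rw [thetaE_self hΦ hy, thetaE_self hΦ (hy.trans_le hyx)]
    exact ⟨thetaE_le_half hΦ hy hyx, thetaE_le_half hΦ hy hyx⟩
end

section
/- Let f : [0, +∞) → ℝ be a locally Lipschitz function and let C ∈ ℝ. Suppose that for almost every t ∈ [0, +∞) with f(t) > C, the derivative f′(t) exists and f′(t) ≤ 0. Then f(t) ≤ max{f(0), C} for all t ∈ [0, +∞). -/
/-!
Replace `f` by `g = max f C`. At a point where `f ≤ C`, `g` attains its minimum, so
`deriv g = 0` there (differentiable or not); near a point `t > 0` where `f > C`, `g` agrees with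
`f`, so `deriv g ≤ 0` almost everywhere on `[0, ∞)`. A locally Lipschitz function with a.e.
nonpositive derivative is antitone: on short intervals it is Lipschitz, hence absolutely
continuous, and the fundamental theorem of calculus applies; continuous induction globalises.
Thus `f t ≤ g t ≤ g 0 = max (f 0) C`.
-/

open MeasureTheory Set Filter Topology

theorem LipschitzOnWith.le_of_ae_deriv_nonpos {f : ℝ → ℝ} {K : NNReal} {a b : ℝ} (hab : a ≤ b)
    (hf : LipschitzOnWith K f (Icc a b))
    (hd : ∀ᵐ x ∂volume.restrict (Ioo a b), deriv f x ≤ 0) :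
    f b ≤ f a := by
  have hac : AbsolutelyContinuousOnInterval f a b :=
    LipschitzOnWith.absolutelyContinuousOnInterval (by rwa [uIcc_of_le hab])
  have hd' : deriv f ≤ᵐ[volume.restrict (Ioc a b)] 0 := by
    rwa [← Measure.restrict_congr_set Ioo_ae_eq_Ioc]
  have hint : ∫ x in a..b, deriv f x ≤ 0 := by
    rw [intervalIntegral.integral_of_le hab]
    exact integral_nonpos_of_ae hd'
  linarith [hac.integral_deriv_eq_sub]

theorem LipschitzOnWith.max_const {α : Type*} [PseudoEMetricSpace α] {f : α → ℝ} {K : NNReal}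
    {s : Set α}
    (hf : LipschitzOnWith K f s) (c : ℝ) : LipschitzOnWith K (fun x => max (f x) c) s := by
  simpa [Function.comp_def] using (LipschitzWith.id.max_const c).comp_lipschitzOnWith hf

theorem LocallyLipschitzOn.max_const {α : Type*} [PseudoEMetricSpace α] {f : α → ℝ} {s : Set α}
    (hf : LocallyLipschitzOn s f) (c : ℝ) : LocallyLipschitzOn s (fun x => max (f x) c) := by
  intro x hx
  obtain ⟨K, t, ht, hK⟩ := hf hx
  exact ⟨K, t, ht, hK.max_const c⟩

theorem LocallyLipschitzOn.antitoneOn_of_ae_deriv_nonpos {f : ℝ → ℝ} {s : Set ℝ}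
    (hs : s.OrdConnected) (hf : LocallyLipschitzOn s f)
    (hd : ∀ᵐ x ∂volume.restrict s, deriv f x ≤ 0) : AntitoneOn f s := by
  intro x hx y hy hxy
  have hxy_sub : Icc x y ⊆ s := hs.out hx hy
  have hclosed : IsClosed ({z | f z ≤ f x} ∩ Icc x y) := by
    rw [inter_comm]
    exact ((hf.continuousOn.mono hxy_sub).preimage_isClosed_of_isClosed isClosed_Icc isClosed_Iic)
  refine hclosed.Icc_subset_of_forall_mem_nhdsWithin (le_refl (f x)) ?_ ⟨hxy, le_rfl⟩
  rintro z ⟨hzx, hz⟩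
  obtain ⟨K, t, ht, hK⟩ := hf (hxy_sub (Ico_subset_Icc_self hz))
  have hzy_sub : Icc z y ⊆ s := hs.out (hxy_sub (Ico_subset_Icc_self hz)) hy
  have ht' : t ∩ Icc z y ∈ 𝓝[≥] z := by
    rw [← nhdsWithin_Icc_eq_nhdsGE hz.2]
    exact inter_mem (nhdsWithin_mono z hzy_sub ht) self_mem_nhdsWithin
  obtain ⟨u, hzu, hu⟩ := mem_nhdsGE_iff_exists_Icc_subset.1 ht'
  filter_upwards [Ioc_mem_nhdsGT hzu] with w hw
  have hzw : Icc z w ⊆ t ∩ Icc z y := (Icc_subset_Icc_right hw.2).trans hu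
  have hdecr : f w ≤ f z := (hK.mono fun v hv => (hzw hv).1).le_of_ae_deriv_nonpos hw.1.le
    (ae_restrict_of_ae_restrict_of_subset
      (Ioo_subset_Icc_self.trans (hzw.trans (inter_subset_right.trans hzy_sub))) hd)
  exact hdecr.trans hzx

theorem deriv_max_const_nonpos {f : ℝ → ℝ} {c x : ℝ} (hf : ContinuousAt f x)
    (hd : c < f x → deriv f x ≤ 0) : deriv (fun y => max (f y) c) x ≤ 0 := by
  rcases le_or_gt (f x) c with hle | hlt
  · have hmin : IsLocalMin (fun y => max (f y) c) x :=
      Eventually.of_forall fun y => by simp only [max_eq_right hle, le_max_right]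
    exact hmin.deriv_eq_zero.le
  · have heq : (fun y => max (f y) c) =ᶠ[𝓝 x] f :=
      (hf.eventually (lt_mem_nhds hlt)).mono fun y hy => max_eq_left hy.le
    exact heq.deriv_eq ▸ hd hlt

/-- Calculus lemma (Ge–Hua): if `f : [0, ∞) → ℝ` is locally Lipschitz and `f′(t) ≤ 0` for
almost every `t` in the upper level set `{f > C}`, then `f(t) ≤ max {f(0), C}` for all
`t ≥ 0`. -/
theorem upper_level_decrease (f : ℝ → ℝ) (C : ℝ)
    (hlip : ∀ t ∈ Set.Ici (0 : ℝ), ∃ K : NNReal, ∃ s ∈ nhdsWithin t (Set.Ici (0 : ℝ)),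
      LipschitzOnWith K f s)
    (hderiv : ∀ᵐ t ∂(volume.restrict (Set.Ici (0 : ℝ))),
      C < f t → DifferentiableAt ℝ f t ∧ deriv f t ≤ 0) :
    ∀ t ∈ Set.Ici (0 : ℝ), f t ≤ max (f 0) C := by
  intro t ht
  have hf : LocallyLipschitzOn (Ici 0) f := hlip
  have hg : ∀ᵐ x ∂volume.restrict (Ici 0), deriv (fun y => max (f y) C) x ≤ 0 := by
    rw [← Measure.restrict_congr_set Ioi_ae_eq_Ici] at hderiv ⊢
    filter_upwards [hderiv, ae_restrict_mem measurableSet_Ioi] with x hx hpos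
    exact deriv_max_const_nonpos ((hf.continuousOn x (Ioi_subset_Ici_self hpos)).continuousAt
      (Ici_mem_nhds hpos)) fun h => (hx h).2
  exact (le_max_left _ _).trans <|
    (hf.max_const C).antitoneOn_of_ae_deriv_nonpos ordConnected_Ici hg self_mem_Ici ht ht
end

section
/- Let f : [0, +∞) → ℝ be a locally Lipschitz function and let C ∈ ℝ. Suppose that for almost every t ∈ [0, +∞) with f(t) < C, the derivative f′(t) exists and f′(t) ≥ 0. Then f(t) ≥ min{f(0), C} for all t ∈ [0, +∞). -/
/-!
On an interval where `f` stays below `C`, the hypothesis gives `f' ≥ 0` almost everywhere. A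
locally Lipschitz `f` is absolutely continuous on compact intervals, so the fundamental theorem
of calculus `f b - f a = ∫ₐᵇ f'` turns this into `f a ≤ f b`. If `f t < min (f 0) C` for some
`t`, let `c` be the last time before `t` with `f c ≥ min (f 0) C`; then `f < C` on `(c, t]`, so
`f c ≤ f t`, a contradiction.
-/

open MeasureTheory Set

namespace AbsolutelyContinuousOnInterval

variable {f : ℝ → ℝ} {a b : ℝ}

theorem le_of_ae_deriv_nonneg (hf : AbsolutelyContinuousOnInterval f a b) (hab : a ≤ b)
    (h : ∀ᵐ t, t ∈ Ioc a b → 0 ≤ deriv f t) : f a ≤ f b := by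
  have hftc := hf.integral_deriv_eq_sub
  rw [intervalIntegral.integral_of_le hab] at hftc
  linarith [setIntegral_nonneg_ae measurableSet_Ioc h]

theorem min_le_of_ae_deriv_nonneg_of_lt {C : ℝ} (hf : AbsolutelyContinuousOnInterval f a b)
    (hab : a ≤ b) (h : ∀ᵐ t, t ∈ Ioc a b → f t < C → 0 ≤ deriv f t) :
    ∀ t ∈ Icc a b, min (f a) C ≤ f t := by
  by_contra! ⟨t, ht, hft⟩
  set M := min (f a) C
  set S := {s ∈ Icc a t | M ≤ f s}
  have hf_cont : ContinuousOn f (Icc a t) :=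
    hf.continuousOn.mono (uIcc_of_le hab ▸ Icc_subset_Icc_right ht.2)
  have hS_closed : IsClosed S := hf_cont.preimage_isClosed_of_isClosed isClosed_Icc isClosed_Ici
  have hS_nonempty : S.Nonempty := ⟨a, ⟨le_rfl, ht.1⟩, min_le_left _ _⟩
  have hS_bdd : BddAbove S := ⟨t, fun s hs => hs.1.2⟩
  set c := sSup S
  obtain ⟨⟨hac, hct⟩, hfc⟩ : c ∈ S := hS_closed.csSup_mem hS_nonempty hS_bdd
  have hbelow : ∀ s ∈ Ioc c t, f s < C := fun s ⟨hcs, hst⟩ =>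
    lt_of_not_ge fun hCs => (le_csSup hS_bdd ⟨⟨hac.trans hcs.le, hst⟩,
      (min_le_right _ _).trans hCs⟩).not_gt hcs
  have hmono : f c ≤ f t := by
    refine (hf.mono ?_).le_of_ae_deriv_nonneg hct ?_
    · rw [uIcc_of_le hct, uIcc_of_le hab]
      exact Icc_subset_Icc hac ht.2
    · filter_upwards [h] with s hs hmem
      exact hs ⟨hac.trans_lt hmem.1, hmem.2.trans ht.2⟩ (hbelow s hmem)
  exact hft.not_ge (hfc.trans hmono)

end AbsolutelyContinuousOnInterval

/-- Calculus lemma (Ge–Hua): if `f : [0, ∞) → ℝ` is locally Lipschitz and `f′(t) ≥ 0` for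
almost every `t` in the lower level set `{f < C}`, then `f(t) ≥ min {f(0), C}` for all
`t ≥ 0`. -/
theorem lower_level_increase (f : ℝ → ℝ) (C : ℝ)
    (hlip : ∀ t ∈ Set.Ici (0 : ℝ), ∃ K : NNReal, ∃ s ∈ nhdsWithin t (Set.Ici (0 : ℝ)),
      LipschitzOnWith K f s)
    (hderiv : ∀ᵐ t ∂(volume.restrict (Set.Ici (0 : ℝ))),
      f t < C → DifferentiableAt ℝ f t ∧ 0 ≤ deriv f t) :
    ∀ t ∈ Set.Ici (0 : ℝ), min (f 0) C ≤ f t := by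
  intro T (hT : 0 ≤ T)
  have hloc : LocallyLipschitzOn (Ici 0) f := fun t ht => hlip t ht
  obtain ⟨K, hK⟩ := (hloc.mono Icc_subset_Ici_self).exists_lipschitzOnWith_of_compact
    (isCompact_Icc (a := 0) (b := T))
  have hac : AbsolutelyContinuousOnInterval f 0 T :=
    LipschitzOnWith.absolutelyContinuousOnInterval (uIcc_of_le hT ▸ hK)
  have hae : ∀ᵐ t, t ∈ Ioc 0 T → f t < C → 0 ≤ deriv f t := by
    filter_upwards [(ae_restrict_iff' measurableSet_Ici).1 hderiv] with t ht hmem hlt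
    exact (ht hmem.1.le hlt).2
  exact hac.min_le_of_ae_deriv_nonneg_of_lt hT hae T ⟨hT, le_rfl⟩
end

section
/- Let C₀ > 0 and let g : [0, +∞) → (0, +∞) be a locally Lipschitz function such that for almost every t ∈ [0, +∞) the derivative g′(t) exists and satisfies g′(t) ≤ −C₀ · sinh(g(t)). Then tanh(g(t)/2) ≤ tanh(g(0)/2) · e^{−C₀ t} for all t ≥ 0; in particular g(t) → 0 exponentially fast as t → +∞. -/
/-!
The derivative of `y ↦ log (tanh (y / 2))` is `1 / sinh y`, so by the chain rule the hypothesis says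
that `ψ t = log (tanh (g t / 2))` satisfies `ψ' ≤ -C₀` almost everywhere. As a composition of
locally Lipschitz maps, `ψ` is Lipschitz, hence absolutely continuous, on every `[0, T]`, and the
fundamental theorem of calculus gives `ψ T - ψ 0 ≤ -C₀ T`. Exponentiating yields the bound, and
since `tanh` is strictly increasing, `tanh (g t / 2) → 0` forces `g t → 0`.
-/

open MeasureTheory Set Filter
open scoped Topology

namespace Real

theorem hasStrictDerivAt_tanh (x : ℝ) : HasStrictDerivAt tanh (1 / cosh x ^ 2) x := by
  have h := (hasStrictDerivAt_sinh x).div (hasStrictDerivAt_cosh x) (cosh_pos x).ne'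
  rw [show cosh x * cosh x - sinh x * sinh x = 1 by nlinarith [cosh_sq_sub_sinh_sq x]] at h
  exact h.congr_of_eventuallyEq (.of_forall fun y => (tanh_eq_sinh_div_cosh y).symm)

theorem tanh_lt_tanh {x y : ℝ} : tanh x < tanh y ↔ x < y := by
  rw [← artanh_lt_artanh_iff ⟨neg_one_lt_tanh x, tanh_lt_one x⟩ ⟨neg_one_lt_tanh y, tanh_lt_one y⟩,
    artanh_tanh, artanh_tanh]

theorem tanh_pos_iff {x : ℝ} : 0 < tanh x ↔ 0 < x := by
  simpa only [tanh_zero] using @tanh_lt_tanh 0 x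

theorem hasStrictDerivAt_log_tanh_half {y : ℝ} (hy : 0 < y) :
    HasStrictDerivAt (fun y => log (tanh (y / 2))) (sinh y)⁻¹ y := by
  have hhalf : HasStrictDerivAt (fun y : ℝ => y / 2) (1 / 2) y := by
    simpa using (hasStrictDerivAt_id y).div_const 2
  have h : HasStrictDerivAt (fun y => log (tanh (y / 2))) _ y :=
    ((hasStrictDerivAt_tanh _).comp y hhalf).log (tanh_pos_iff.2 (half_pos hy)).ne'
  convert h using 1
  have hc := (cosh_pos (y / 2)).ne'
  have hs := (sinh_pos_iff.2 (half_pos hy)).ne'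
  have hdouble : sinh y = 2 * sinh (y / 2) * cosh (y / 2) := by rw [← sinh_two_mul]; ring_nf
  rw [Function.comp_apply, tanh_eq_sinh_div_cosh, hdouble]
  field_simp

end Real

open Real

theorem LocallyLipschitzOn.comp {α β γ : Type*} [PseudoEMetricSpace α] [PseudoEMetricSpace β]
    [PseudoEMetricSpace γ] {f : β → γ} {g : α → β} {s : Set α} {t : Set β}
    (hf : LocallyLipschitzOn t f) (hg : LocallyLipschitzOn s g) (hst : MapsTo g s t) :
    LocallyLipschitzOn s (f ∘ g) := by
  intro x hx
  obtain ⟨Kg, u, hu, hgu⟩ := hg hx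
  obtain ⟨Kf, v, hv, hfv⟩ := hf (hst hx)
  have hpre : g ⁻¹' v ∈ 𝓝[s] x := hg.continuousOn x hx |>.tendsto_nhdsWithin hst hv
  exact ⟨Kf * Kg, u ∩ g ⁻¹' v, inter_mem hu hpre,
    hfv.comp (hgu.mono inter_subset_left) fun _ hy => hy.2⟩

theorem locallyLipschitzOn_of_hasStrictDerivAt {𝕜 F : Type*} [NontriviallyNormedField 𝕜]
    [NormedAddCommGroup F] [NormedSpace 𝕜 F] {f f' : 𝕜 → F} {s : Set 𝕜}
    (hf : ∀ x ∈ s, HasStrictDerivAt f (f' x) x) : LocallyLipschitzOn s f := fun x hx =>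
  let ⟨K, u, hu, hfu⟩ := (hf x hx).hasStrictFDerivAt.exists_lipschitzOnWith
  ⟨K, u, nhdsWithin_le_nhds hu, hfu⟩

theorem AbsolutelyContinuousOnInterval.sub_le_mul_of_ae_deriv_le {f : ℝ → ℝ} {a b c : ℝ}
    (hf : AbsolutelyContinuousOnInterval f a b) (hab : a ≤ b)
    (hderiv : ∀ᵐ x ∂volume.restrict (Icc a b), deriv f x ≤ c) : f b - f a ≤ c * (b - a) := by
  calc f b - f a = ∫ x in a..b, deriv f x := hf.integral_deriv_eq_sub.symm
    _ ≤ ∫ _ in a..b, c :=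
      intervalIntegral.integral_mono_ae_restrict hab hf.intervalIntegrable_deriv
        intervalIntegrable_const hderiv
    _ = c * (b - a) := by rw [intervalIntegral.integral_const, smul_eq_mul, mul_comm]

theorem LocallyLipschitzOn.sub_le_mul_of_ae_deriv_le {f : ℝ → ℝ} {s : Set ℝ} {a b c : ℝ}
    (hf : LocallyLipschitzOn s f) (hab : a ≤ b) (hs : Icc a b ⊆ s)
    (hderiv : ∀ᵐ x ∂volume.restrict (Icc a b), deriv f x ≤ c) : f b - f a ≤ c * (b - a) := by
  obtain ⟨K, hK⟩ := (hf.mono hs).exists_lipschitzOnWith_of_compact isCompact_Icc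
  rw [← uIcc_of_le hab] at hK
  exact hK.absolutelyContinuousOnInterval.sub_le_mul_of_ae_deriv_le hab hderiv

theorem tendsto_nhds_zero_of_tanh_le {α : Type*} {l : Filter α} {u v : α → ℝ}
    (hu : ∀ᶠ x in l, 0 ≤ u x) (huv : ∀ᶠ x in l, tanh (u x) ≤ v x)
    (hv : Tendsto v l (𝓝 0)) : Tendsto u l (𝓝 0) := by
  refine tendsto_order.2 ⟨fun a ha => hu.mono fun x hx => ha.trans_le hx, fun b hb => ?_⟩
  filter_upwards [huv, hv.eventually (gt_mem_nhds (tanh_pos_iff.2 hb))] with x hle hlt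
  exact tanh_lt_tanh.1 (hle.trans_lt hlt)

theorem deriv_log_tanh_half_comp_le {g : ℝ → ℝ} {t C : ℝ} (hpos : 0 < g t)
    (hg : DifferentiableAt ℝ g t) (hle : deriv g t ≤ -C * sinh (g t)) :
    deriv (fun t => log (tanh (g t / 2))) t ≤ -C := by
  have hsinh : 0 < sinh (g t) := sinh_pos_iff.2 hpos
  have h : HasDerivAt (fun t => log (tanh (g t / 2))) _ t :=
    (hasStrictDerivAt_log_tanh_half hpos).hasDerivAt.comp t hg.hasDerivAt
  rw [h.deriv]
  calc (sinh (g t))⁻¹ * deriv g t ≤ (sinh (g t))⁻¹ * (-C * sinh (g t)) := by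
        gcongr
    _ = -C := by field_simp

/-- If `g : [0, ∞) → (0, ∞)` is locally Lipschitz and satisfies `g′(t) ≤ −C₀ sinh(g(t))`
almost everywhere, then `tanh(g(t)/2) ≤ tanh(g(0)/2) e^{−C₀ t}` for all `t ≥ 0`; in
particular `g(t) → 0` exponentially fast as `t → +∞`. -/
theorem exp_decay_of_sinh_decrease (C₀ : ℝ) (hC₀ : 0 < C₀) (g : ℝ → ℝ)
    (hpos : ∀ t ∈ Set.Ici (0 : ℝ), 0 < g t)
    (hlip : ∀ t ∈ Set.Ici (0 : ℝ), ∃ K : NNReal, ∃ s ∈ nhdsWithin t (Set.Ici (0 : ℝ)),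
      LipschitzOnWith K g s)
    (hderiv : ∀ᵐ t ∂(volume.restrict (Set.Ici (0 : ℝ))),
      DifferentiableAt ℝ g t ∧ deriv g t ≤ -C₀ * Real.sinh (g t)) :
    (∀ t ∈ Set.Ici (0 : ℝ),
      Real.tanh (g t / 2) ≤ Real.tanh (g 0 / 2) * Real.exp (-C₀ * t)) ∧
    Filter.Tendsto g Filter.atTop (nhds 0) := by
  set ψ : ℝ → ℝ := fun t => log (tanh (g t / 2))
  have hψ : LocallyLipschitzOn (Ici 0) ψ :=
    (locallyLipschitzOn_of_hasStrictDerivAt (s := Ioi 0) fun _ hy =>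
      hasStrictDerivAt_log_tanh_half hy).comp (fun t ht => hlip t ht) hpos
  have hψ_deriv : ∀ᵐ t ∂volume.restrict (Ici 0), deriv ψ t ≤ -C₀ := by
    filter_upwards [hderiv, ae_restrict_mem measurableSet_Ici] with t ht ht₀
    exact deriv_log_tanh_half_comp_le (hpos t ht₀) ht.1 ht.2
  have hexp : ∀ t ∈ Ici (0 : ℝ), exp (ψ t) = tanh (g t / 2) := fun t ht =>
    exp_log (tanh_pos_iff.2 (half_pos (hpos t ht)))
  have hdecay : ∀ t ∈ Ici (0 : ℝ),
      tanh (g t / 2) ≤ tanh (g 0 / 2) * exp (-C₀ * t) := by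
    intro t ht
    have h := hψ.sub_le_mul_of_ae_deriv_le ht Icc_subset_Ici_self
      (ae_restrict_of_ae_restrict_of_subset Icc_subset_Ici_self hψ_deriv)
    rw [← hexp t ht, ← hexp 0 self_mem_Ici, ← exp_add, exp_le_exp]
    linarith
  refine ⟨hdecay, ?_⟩
  have hbound : Tendsto (fun t => tanh (g 0 / 2) * exp (-C₀ * t)) atTop (𝓝 0) := by
    simpa using (tendsto_exp_atBot.comp
      (tendsto_id.const_mul_atTop_of_neg (neg_neg_of_pos hC₀))).const_mul (tanh (g 0 / 2))
  have hhalf : Tendsto (fun t => g t / 2) atTop (𝓝 0) :=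
    tendsto_nhds_zero_of_tanh_le
      ((eventually_ge_atTop 0).mono fun t ht => (half_pos (hpos t ht)).le)
      ((eventually_ge_atTop 0).mono hdecay) hbound
  simpa [mul_div_cancel₀] using hhalf.const_mul 2
end
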